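/- For all integers n ≥ 4, the 4-fold convolution ∑_{i+j+k+l=n, i,j,k,l≥1} a(i)a(j)a(k)a(l), divided by a(n), equals 20(n-1)(n-2)(n-3)(25n^6+1350n^5+31495n^4+347406n^3+1211092n^2+1580304n+665280) / (27(3n+11)(3n+8)(3n+5)(3n+10)(3n+7)(3n+4)(n+4)(n+3)(n+2)), where a(n) = 2(4n+1)!/((n+1)!(3n+2)!). -/

import Mathlib

/-!
Let `B(z)` be the generating function of the Fuss–Catalan numbers `(4m)!/(m!(3m+1)!)`, so that
`B = 1 + z B⁴`. The coefficients `[z^m] B^s` are the Raney numbers `raney m s`, polynomials in `s`,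
whence the convolution rule `raney · x ⋆ raney · y = raney · (x + y)`. Since
`a(m+1) = [z^m] (B⁴ + B⁵ - B⁶)`, the four-fold convolution of `a` at `n = N + 4` is
`[z^N] B¹⁶ (1 + B - B²)⁴`, a combination of the nine numbers `raney N s`, `16 ≤ s ≤ 24`.
These are hypergeometric in `s`, so each is an explicit rational multiple of `a n`.
-/

open Filter Finset

noncomputable def a (n : ℕ) : ℝ :=
  2 * (Nat.factorial (4 * n + 1)) / ((Nat.factorial (n + 1)) * (Nat.factorial (3 * n + 2)))

open PowerSeries Nat

/-- `raney m x = x (x + 3m + 1) (x + 3m + 2) ⋯ (x + 4m - 1) / m!`, which for natural `x` is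
`x / (4m + x) * (4m + x).choose m = [z^m] B(z)^x`. -/
noncomputable def raney : ℕ → ℝ → ℝ
  | 0, _ => 1
  | n + 1, x => x * (∏ i ∈ range n, (x + (3 * n + 4) + i)) / (n + 1)!

@[simp] lemma raney_zero (x : ℝ) : raney 0 x = 1 := rfl

lemma raney_succ (n : ℕ) (x : ℝ) :
    raney (n + 1) x = x * (∏ i ∈ range n, (x + (3 * n + 4) + i)) / (n + 1)! := rfl

@[simp] lemma raney_succ_zero (n : ℕ) : raney (n + 1) 0 = 0 := by
  simp [raney_succ]

lemma raney_succ_add_one_sub (n : ℕ) (x : ℝ) :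
    raney (n + 1) (x + 1) - raney (n + 1) x = raney n (x + 4) := by
  cases n with
  | zero => simp [raney_succ]
  | succ m =>
    set P := ∏ i ∈ range m, (x + 3 * m + 8 + i)
    have h₁ : ∏ i ∈ range (m + 1), (x + 1 + (3 * ↑(m + 1) + 4) + i) = P * (x + 4 * m + 8) := by
      rw [prod_range_succ]; push_cast; congr 1
      · exact prod_congr rfl fun i _ => by ring
      · ring
    have h₂ : ∏ i ∈ range (m + 1), (x + (3 * ↑(m + 1) + 4) + i) = P * (x + 3 * m + 7) := by
      rw [prod_range_succ']; push_cast; congr 1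
      · exact prod_congr rfl fun i _ => by ring
      · ring
    have h₃ : ∏ i ∈ range m, (x + 4 + (3 * m + 4) + i) = P :=
      prod_congr rfl fun i _ => by ring
    rw [raney_succ, raney_succ, raney_succ, h₁, h₂, h₃, factorial_succ (m + 1)]
    push_cast
    field_simp
    ring

lemma sum_range_raney_mul_raney (n x : ℕ) (y : ℝ) :
    ∑ k ∈ range (n + 1), raney k x * raney (n - k) y = raney n (x + y) := by
  induction n generalizing x with
  | zero => simp
  | succ n ihn =>
    induction x with
    | zero =>
      rw [sum_eq_single 0 (fun k _ hk => ?_) (by simp)]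
      · simp
      · obtain ⟨j, rfl⟩ := exists_eq_succ_of_ne_zero hk
        simp
    | succ x ihx =>
      have hdiff : ∑ k ∈ range (n + 2), (raney k (x + 1) - raney k x) * raney (n + 1 - k) y
          = raney n (x + 4 + y) := by
        have hconv := ihn (x + 4)
        push_cast at hconv
        rw [sum_range_succ', ← hconv]
        simp only [raney_zero, sub_self, zero_mul, add_zero, raney_succ_add_one_sub]
        exact sum_congr rfl fun k _ => by rw [Nat.add_sub_add_right]
      calc ∑ k ∈ range (n + 2), raney k ↑(x + 1) * raney (n + 1 - k) y
          = ∑ k ∈ range (n + 2), raney k x * raney (n + 1 - k) y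
            + ∑ k ∈ range (n + 2), (raney k (x + 1) - raney k x) * raney (n + 1 - k) y := by
            rw [← sum_add_distrib]; push_cast; exact sum_congr rfl fun k _ => by ring
        _ = raney (n + 1) (↑(x + 1) + y) := by
            rw [ihx, hdiff, Nat.cast_succ, add_right_comm, add_right_comm (x : ℝ) 1]
            linear_combination -raney_succ_add_one_sub n (x + y)

lemma raney_mul_add_one (n : ℕ) (x : ℝ) :
    x * (x + 3 * n + 1) * raney n (x + 1) = (x + 1) * (x + 4 * n) * raney n x := by
  cases n with
  | zero => simp only [raney_zero, Nat.cast_zero]; ring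
  | succ m =>
    have key : (x + 3 * m + 4) * ∏ i ∈ range m, (x + 1 + (3 * m + 4) + i)
        = (∏ i ∈ range m, (x + (3 * m + 4) + i)) * (x + 4 * m + 4) := by
      calc (x + 3 * m + 4) * ∏ i ∈ range m, (x + 1 + (3 * m + 4) + i)
          = ∏ i ∈ range (m + 1), (x + (3 * m + 4) + i) := by
            rw [prod_range_succ', mul_comm]; push_cast
            exact congr_arg₂ _ (prod_congr rfl fun i _ => by ring) (by ring)
        _ = _ := by rw [prod_range_succ]; ring
    rw [raney_succ, raney_succ]
    push_cast
    linear_combination (x * (x + 1) / (m + 1)!) * key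

lemma raney_add_one_eq (n : ℕ) {x : ℝ} (hx : 0 < x) :
    raney n (x + 1) = (x + 1) * (x + 4 * n) / (x * (x + 3 * n + 1)) * raney n x := by
  field_simp
  linear_combination raney_mul_add_one n x

lemma raney_natCast_add_one (m s : ℕ) :
    raney m (s + 1) * (m ! * (3 * m + s + 1)!) = (s + 1) * (4 * m + s)! := by
  cases m with
  | zero => simp [factorial_succ]
  | succ k =>
    have h := congr_arg (Nat.cast (R := ℝ)) (factorial_mul_ascFactorial (3 * k + s + 4) k)
    rw [ascFactorial_eq_prod_range] at h
    push_cast at h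
    rw [raney_succ, show 3 * (k + 1) + s + 1 = 3 * k + s + 4 by ring,
      show 4 * (k + 1) + s = 3 * k + s + 4 + k by ring, ← h]
    field_simp
    rw [mul_comm]
    congr 1
    ext i
    ring

lemma raney_natCast_pos (m s : ℕ) : 0 < raney m (s + 1) := by
  have h := raney_natCast_add_one m s
  have : (0 : ℝ) < (s + 1) * (4 * m + s)! := by positivity
  exact pos_of_mul_pos_left (h ▸ this) (by positivity)

lemma a_add_one (m : ℕ) : a (m + 1) = raney m 4 + raney m 5 - raney m 6 := by
  have r4 : raney m 4 = 4 * (4 * m + 3)! / (m ! * (3 * m + 4)!) := by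
    refine eq_div_of_mul_eq (by positivity) ?_
    exact_mod_cast raney_natCast_add_one m 3
  have r5 := raney_add_one_eq m (x := 4) (by norm_num)
  have r6 := raney_add_one_eq m (x := 5) (by norm_num)
  norm_num at r5 r6
  rw [r6, r5, r4, a, show 4 * (m + 1) + 1 = 4 * m + 3 + 1 + 1 by ring,
    show 3 * (m + 1) + 2 = 3 * m + 4 + 1 by ring]
  simp only [factorial_succ (4 * m + 3 + 1), factorial_succ (4 * m + 3),
    factorial_succ (3 * m + 4), factorial_succ (m + 1), factorial_succ m]
  push_cast
  field_simp
  ring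

lemma a_add_four (N : ℕ) :
    a (N + 4) = (4 * N + 16) * (4 * N + 17) * (3 * N + 15) * (3 * N + 16) /
      (8 * (N + 1) * (N + 2) * (N + 3) * (N + 4) * (N + 5)) * raney N 16 := by
  have r16 : raney N 16 = 16 * (4 * N + 15)! / (N ! * (3 * N + 16)!) := by
    refine eq_div_of_mul_eq (by positivity) ?_
    exact_mod_cast raney_natCast_add_one N 15
  rw [a, r16, show 4 * (N + 4) + 1 = 4 * N + 15 + 1 + 1 by ring,
    show 3 * (N + 4) + 2 = 3 * N + 14 by ring, show 3 * N + 16 = 3 * N + 14 + 1 + 1 by ring]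
  simp only [factorial_succ (4 * N + 15 + 1), factorial_succ (4 * N + 15),
    factorial_succ (3 * N + 14 + 1), factorial_succ (3 * N + 14), factorial_succ (N + 4),
    factorial_succ (N + 3), factorial_succ (N + 2), factorial_succ (N + 1), factorial_succ N]
  push_cast
  field_simp
  ring

noncomputable def fussCatalanSeries : ℝ⟦X⟧ := PowerSeries.mk fun m => raney m 1

lemma coeff_fussCatalanSeries_pow (s m : ℕ) :
    coeff m (fussCatalanSeries ^ s) = raney m s := by
  induction s generalizing m with
  | zero => cases m <;> simp [coeff_one]
  | succ s ih =>
    rw [pow_succ, coeff_mul, Finset.Nat.sum_antidiagonal_eq_sum_range_succ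
      (fun i j => coeff i (fussCatalanSeries ^ s) * coeff j fussCatalanSeries)]
    simp only [ih]
    simp only [fussCatalanSeries, coeff_mk]
    exact_mod_cast sum_range_raney_mul_raney m s 1

lemma coeff_mul_eq_sum_Ico {R : Type*} [Semiring R] {p q : R⟦X⟧} (hp : constantCoeff p = 0)
    (hq : constantCoeff q = 0) (n : ℕ) :
    coeff n (p * q) = ∑ i ∈ Ico 1 n, coeff i p * coeff (n - i) q := by
  rw [coeff_mul, Finset.Nat.sum_antidiagonal_eq_sum_range_succ (fun i j => coeff i p * coeff j q)]
  rcases Nat.eq_zero_or_pos n with rfl | hn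
  · simp [hp]
  · rw [sum_range_succ, sum_range_eq_add_Ico _ (by omega)]
    simp [hp, hq]

lemma sum_Ico_fourfold_eq_coeff {R : Type*} [CommSemiring R] (f : ℕ → R) (N : ℕ) :
    ∑ i ∈ Ico 1 (N + 4), ∑ j ∈ Ico 1 (N + 4 - i), ∑ k ∈ Ico 1 (N + 4 - i - j),
        f i * f j * f k * f (N + 4 - i - j - k) =
      coeff N ((PowerSeries.mk fun m => f (m + 1)) ^ 4) := by
  set F : R⟦X⟧ := X * PowerSeries.mk fun m => f (m + 1)
  have hF : ∀ m, 1 ≤ m → coeff m F = f m := by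
    intro m hm
    obtain ⟨m, rfl⟩ := Nat.exists_eq_add_of_le' hm
    simp [F, coeff_succ_X_mul]
  have hF₀ : constantCoeff F = 0 := by simp [F]
  rw [← coeff_X_pow_mul, show X ^ 4 * (PowerSeries.mk fun m => f (m + 1)) ^ 4 = F * (F * (F * F))
    by ring, coeff_mul_eq_sum_Ico hF₀ (by simp [hF₀])]
  refine sum_congr rfl fun i hi => ?_
  rw [coeff_mul_eq_sum_Ico hF₀ (by simp [hF₀]), mul_sum]
  refine sum_congr rfl fun j hj => ?_
  rw [coeff_mul_eq_sum_Ico hF₀ hF₀, mul_sum, mul_sum]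
  refine sum_congr rfl fun k hk => ?_
  simp only [mem_Ico] at hi hj hk
  rw [hF i hi.1, hF j hj.1, hF k hk.1, hF _ (by omega)]
  ring

lemma coeff_mk_a_add_one_pow_four (N : ℕ) :
    coeff N ((PowerSeries.mk fun m => a (m + 1)) ^ 4) =
      raney N 16 + 4 * raney N 17 + 2 * raney N 18 - 8 * raney N 19 - 5 * raney N 20 +
        8 * raney N 21 + 2 * raney N 22 - 4 * raney N 23 + raney N 24 := by
  have hpow := coeff_fussCatalanSeries_pow
  set B := fussCatalanSeries
  have hA : (PowerSeries.mk fun m => a (m + 1)) = B ^ 4 + B ^ 5 - B ^ 6 := by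
    ext m
    simp [a_add_one, hpow]
  rw [hA, show (B ^ 4 + B ^ 5 - B ^ 6) ^ 4 = B ^ 16 + 4 * B ^ 17 + 2 * B ^ 18 - 8 * B ^ 19 -
      5 * B ^ 20 + 8 * B ^ 21 + 2 * B ^ 22 - 4 * B ^ 23 + B ^ 24 by ring]
  simp only [← map_ofNat (C (R := ℝ)), map_add, map_sub, coeff_C_mul, hpow, Nat.cast_ofNat]

lemma raney_combination_div_a (N : ℕ) :
    (raney N 16 + 4 * raney N 17 + 2 * raney N 18 - 8 * raney N 19 - 5 * raney N 20 +
        8 * raney N 21 + 2 * raney N 22 - 4 * raney N 23 + raney N 24) / a (N + 4) =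
      (20 * (((N + 4 : ℕ) : ℝ) - 1) * ((N + 4 : ℕ) - 2) * ((N + 4 : ℕ) - 3) *
          (25 * ((N + 4 : ℕ) : ℝ) ^ 6 + 1350 * (N + 4 : ℕ) ^ 5 + 31495 * (N + 4 : ℕ) ^ 4 +
            347406 * (N + 4 : ℕ) ^ 3 + 1211092 * (N + 4 : ℕ) ^ 2 + 1580304 * (N + 4 : ℕ) +
            665280)) /
        (27 * (3 * ((N + 4 : ℕ) : ℝ) + 11) * (3 * (N + 4 : ℕ) + 8) * (3 * (N + 4 : ℕ) + 5) *
          (3 * (N + 4 : ℕ) + 10) * (3 * (N + 4 : ℕ) + 7) * (3 * (N + 4 : ℕ) + 4) *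
          ((N + 4 : ℕ) + 4) * ((N + 4 : ℕ) + 3) * ((N + 4 : ℕ) + 2)) := by
  have r17 := raney_add_one_eq N (x := 16) (by norm_num)
  have r18 := raney_add_one_eq N (x := 17) (by norm_num)
  have r19 := raney_add_one_eq N (x := 18) (by norm_num)
  have r20 := raney_add_one_eq N (x := 19) (by norm_num)
  have r21 := raney_add_one_eq N (x := 20) (by norm_num)
  have r22 := raney_add_one_eq N (x := 21) (by norm_num)
  have r23 := raney_add_one_eq N (x := 22) (by norm_num)
  have r24 := raney_add_one_eq N (x := 23) (by norm_num)
  norm_num at r17 r18 r19 r20 r21 r22 r23 r24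
  have h16 := raney_natCast_pos N 15
  norm_num at h16
  rw [r24, r23, r22, r21, r20, r19, r18, r17, a_add_four]
  push_cast
  field_simp
  ring

theorem stmt12 (n : ℕ) (hn : 4 ≤ n) :
    (∑ i ∈ Finset.Ico 1 n, ∑ j ∈ Finset.Ico 1 (n - i), ∑ k ∈ Finset.Ico 1 (n - i - j),
        a i * a j * a k * a (n - i - j - k)) / a n =
      (20 * ((n : ℝ) - 1) * (n - 2) * (n - 3) *
          (25 * (n : ℝ)^6 + 1350 * n^5 + 31495 * n^4 + 347406 * n^3 +
            1211092 * n^2 + 1580304 * n + 665280)) /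
        (27 * (3 * (n : ℝ) + 11) * (3 * n + 8) * (3 * n + 5) * (3 * n + 10) *
          (3 * n + 7) * (3 * n + 4) * (n + 4) * (n + 3) * (n + 2)) := by
  obtain ⟨N, rfl⟩ := Nat.exists_eq_add_of_le' hn
  rw [sum_Ico_fourfold_eq_coeff, coeff_mk_a_add_one_pow_four]
  exact raney_combination_div_a N
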